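/- For each t = 0,…,T−1, H*_t attains its minimum over ℝ; moreover, writing S*_t := min{ x : H*_t(x) = min_{y∈ℝ} H*_t(y) }, the set { x ≤ S*_t : H*_t(x) = H*_t(S*_t) + K_t } is nonempty and has a maximum s*_t, and V*_t(x) = H*_t(S*_t) + K_t for every x < s*_t while V*_t(x) = H*_t(x) for every x ≥ s*_t. -/

import Mathlib

/-!
Scarf's argument. Call `f` `K`-convex when `(y - x) f z ≤ (y - z) f x + (z - x) (f y + K)` for
`x ≤ z ≤ y`; this is Scarf's `K + f y ≥ f z + (y - z) (f z - f x) / (z - x)` with the denominator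
cleared. Convex functions are `0`-convex, and `K`-convexity survives sums, nonnegative multiples
and `y ↦ E V (y - D)`; so if `V*_{t+1}` is `K_{t+1}`-convex, `H*_t` is `K_t`-convex because
`α K_{t+1} ≤ K_t`, and it is continuous and coercive.

For such an `H` with least minimizer `S` and any `s ≤ S` with `H s = H S + K`, `K`-convexity gives
`H ≥ H S + K` on `(-∞, s]` and `H x ≤ H y + K` for `s ≤ x ≤ y`. Hence the infimum defining
`V*_t x` is `H (max x s)`, which is again continuous, bounded below, constant on a left half-line
and `K`-convex, and backward induction on `t` goes through.
-/

open MeasureTheory Filter Set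

def KConvex (K : ℝ) (f : ℝ → ℝ) : Prop :=
  ∀ ⦃x z y : ℝ⦄, x ≤ z → z ≤ y → (y - x) * f z ≤ (y - z) * f x + (z - x) * (f y + K)

namespace KConvex

variable {K K' : ℝ} {f g : ℝ → ℝ}

theorem mono (hf : KConvex K f) (hKK' : K ≤ K') : KConvex K' f := fun x z y hxz hzy => by
  nlinarith [hf hxz hzy, mul_le_mul_of_nonneg_left hKK' (sub_nonneg.2 hxz)]

theorem add (hf : KConvex K f) (hg : KConvex K' g) : KConvex (K + K') (f + g) :=
  fun x z y hxz hzy => by simp only [Pi.add_apply]; linarith [hf hxz hzy, hg hxz hzy]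

theorem const_mul {c : ℝ} (hc : 0 ≤ c) (hf : KConvex K f) : KConvex (c * K) (fun x => c * f x) :=
  fun x z y hxz hzy => by nlinarith [mul_le_mul_of_nonneg_left (hf hxz hzy) hc]

theorem le_max (hf : KConvex K f) {x z y : ℝ} (hxz : x ≤ z) (hzy : z ≤ y) :
    f z ≤ max (f x) (f y + K) := by
  rcases (hxz.trans hzy).eq_or_lt with rfl | hxy
  · rw [le_antisymm hzy hxz]
    exact le_max_left _ _
  refine le_of_mul_le_mul_left ?_ (sub_pos.2 hxy)
  nlinarith [hf hxz hzy, mul_le_mul_of_nonneg_left (le_max_left (f x) (f y + K)) (sub_nonneg.2 hzy),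
    mul_le_mul_of_nonneg_left (le_max_right (f x) (f y + K)) (sub_nonneg.2 hxz)]

variable {S s : ℝ}

theorem add_le_of_le (hf : KConvex K f) (hmin : ∀ y, f S ≤ f y) (hsS : s ≤ S)
    (hs : f s = f S + K) {x : ℝ} (hxs : x ≤ s) : f S + K ≤ f x := by
  rcases hsS.eq_or_lt with rfl | hsS
  · linarith [hmin x]
  have h := hf hxs hsS.le
  rw [hs] at h
  exact le_of_mul_le_mul_left (by linarith) (sub_pos.2 hsS)

theorem le_add_of_le (hf : KConvex K f) (hmin : ∀ y, f S ≤ f y) (hs : f s = f S + K)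
    {x y : ℝ} (hsx : s ≤ x) (hxy : x ≤ y) : f x ≤ f y + K := by
  rcases le_or_gt x S with hxS | hSx
  · calc f x ≤ max (f s) (f S + K) := hf.le_max hsx hxS
      _ ≤ f y + K := by rw [hs, max_self]; linarith [hmin y]
  · calc f x ≤ max (f S) (f y + K) := hf.le_max hSx.le hxy
      _ ≤ f y + K := max_le (by linarith [hmin y, hmin s]) le_rfl

theorem comp_max (hf : KConvex K f) (hup : ∀ x y, s ≤ x → x ≤ y → f x ≤ f y + K) :
    KConvex K (fun x => f (max x s)) := by
  intro x z y hxz hzy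
  simp only
  rcases le_or_gt s x with hsx | hxs
  · rw [max_eq_left hsx, max_eq_left (hsx.trans hxz), max_eq_left (hsx.trans (hxz.trans hzy))]
    exact hf hxz hzy
  rw [max_eq_right hxs.le]
  rcases le_or_gt s z with hsz | hzs
  · -- the three-point inequality at s ≤ z ≤ y, shifted from s to x using f z ≤ f y + K
    rw [max_eq_left hsz, max_eq_left (hsz.trans hzy)]
    nlinarith [hf hsz hzy, mul_le_mul_of_nonneg_left (hup z y hsz hzy) (sub_nonneg.2 hxs.le)]
  · rw [max_eq_right hzs.le]
    nlinarith [mul_le_mul_of_nonneg_left (hup s (max y s) le_rfl (le_max_right y s))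
      (sub_nonneg.2 hxz)]

end KConvex

theorem ConvexOn.kConvex {f : ℝ → ℝ} (hf : ConvexOn ℝ univ f) : KConvex 0 f := by
  intro x z y hxz hzy
  rcases (hxz.trans hzy).eq_or_lt with rfl | hxy
  · rw [le_antisymm hzy hxz]; simp
  have hyx : 0 < y - x := sub_pos.2 hxy
  have h := hf.2 (mem_univ x) (mem_univ y) (div_nonneg (sub_nonneg.2 hzy) hyx.le)
    (div_nonneg (sub_nonneg.2 hxz) hyx.le) (by field_simp; ring)
  have hz : ((y - z) / (y - x)) • x + ((z - x) / (y - x)) • y = z := by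
    simp only [smul_eq_mul]; field_simp; ring
  rw [hz, smul_eq_mul, smul_eq_mul, div_mul_eq_mul_div, div_mul_eq_mul_div, ← add_div,
    le_div_iff₀ hyx] at h
  linarith

section Minimization

variable {H : ℝ → ℝ}

theorem exists_isLeast_minimizers (hc : Continuous H) (hcoer : Tendsto H (cocompact ℝ) atTop) :
    ∃ S, IsLeast {x | ∀ y, H x ≤ H y} S := by
  obtain ⟨x₀, hx₀⟩ := hc.exists_forall_le hcoer
  obtain ⟨κ, hκ, hκH⟩ := mem_cocompact.1 (hcoer.eventually (eventually_gt_atTop (H x₀)))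
  have hclosed : IsClosed {x | ∀ y, H x ≤ H y} := by
    simp only [ofPred_forall]
    exact isClosed_iInter fun y => isClosed_le hc continuous_const
  have hsub : {x | ∀ y, H x ≤ H y} ⊆ κ := fun x hx => by
    by_contra hxκ
    exact (hx x₀).not_gt (hκH hxκ)
  exact (hκ.of_isClosed_subset hclosed hsub).exists_isLeast ⟨x₀, hx₀⟩

theorem exists_isGreatest_level {K : ℝ} (hK : 0 ≤ K) (hc : Continuous H)
    (hcoer : Tendsto H (cocompact ℝ) atTop) (S : ℝ) :
    ∃ s, IsGreatest {x | x ≤ S ∧ H x = H S + K} s := by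
  obtain ⟨b, hbH, hbS⟩ := ((hcoer.mono_left atBot_le_cocompact).eventually
    (eventually_ge_atTop (H S + K))).and (eventually_le_atBot S) |>.exists
  obtain ⟨x, hx, hHx⟩ := intermediate_value_Icc' hbS hc.continuousOn
    (⟨by linarith, hbH⟩ : H S + K ∈ Icc (H S) (H b))
  have hclosed : IsClosed {x | x ≤ S ∧ H x = H S + K} :=
    isClosed_Iic.inter (isClosed_eq hc continuous_const)
  exact ⟨_, hclosed.isGreatest_csSup ⟨x, hx.2, hHx⟩ ⟨S, fun _ hx => hx.1⟩⟩

end Minimization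

structure IsCoerciveKConvex (K : ℝ) (H : ℝ → ℝ) : Prop where
  continuous : Continuous H
  kConvex : KConvex K H
  tendsto_cocompact : Tendsto H (cocompact ℝ) atTop

noncomputable def orderValue (K : ℝ) (H : ℝ → ℝ) (x : ℝ) : ℝ :=
  sInf ((fun y => K * (if x < y then (1 : ℝ) else 0) + H y) '' Ici x)

section OrderValue

variable {K : ℝ} {H : ℝ → ℝ}

theorem orderValue_eq_comp_max (hH : KConvex K H) {S s : ℝ} (hmin : ∀ y, H S ≤ H y)
    (hsS : s ≤ S) (hs : H s = H S + K) : orderValue K H = fun x => H (max x s) := by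
  funext x
  refine IsLeast.csInf_eq ⟨?_, ?_⟩
  · rcases lt_or_ge x s with hxs | hsx
    · refine ⟨S, (hxs.trans_le hsS).le, ?_⟩
      simp only [if_pos (hxs.trans_le hsS), max_eq_right hxs.le, hs]
      ring
    · exact ⟨x, self_mem_Ici, by simp [max_eq_left hsx]⟩
  · rintro _ ⟨y, hxy, rfl⟩
    simp only
    rcases (mem_Ici.1 hxy).eq_or_lt with rfl | hxy
    · rw [if_neg (lt_irrefl _), mul_zero, zero_add]
      rcases lt_or_ge x s with hxs | hsx
      · rw [max_eq_right hxs.le, hs]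
        exact hH.add_le_of_le hmin hsS hs hxs.le
      · rw [max_eq_left hsx]
    · rw [if_pos hxy, mul_one, add_comm]
      rcases lt_or_ge x s with hxs | hsx
      · rw [max_eq_right hxs.le, hs]
        linarith [hmin y]
      · rw [max_eq_left hsx]
        exact hH.le_add_of_le hmin hs hsx hxy.le

theorem exists_orderValue_eq_comp_max (hK : 0 ≤ K) (hH : IsCoerciveKConvex K H) :
    ∃ S, IsLeast {x | ∀ y, H x ≤ H y} S ∧ ∃ s, IsGreatest {x | x ≤ S ∧ H x = H S + K} s ∧
      orderValue K H = fun x => H (max x s) := by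
  obtain ⟨S, hS⟩ := exists_isLeast_minimizers hH.continuous hH.tendsto_cocompact
  obtain ⟨s, hs⟩ := exists_isGreatest_level hK hH.continuous hH.tendsto_cocompact S
  exact ⟨S, hS, s, hs, orderValue_eq_comp_max hH.kConvex hS.1 hs.1.1 hs.1.2⟩

end OrderValue

structure IsRegularKConvex (K : ℝ) (V : ℝ → ℝ) : Prop where
  continuous : Continuous V
  kConvex : KConvex K V
  bddBelow : BddBelow (range V)
  exists_eq_on_Iic : ∃ c, ∀ x ≤ c, V x = V c

theorem isRegularKConvex_zero : IsRegularKConvex 0 (fun _ => 0) :=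
  ⟨continuous_const, (convexOn_const 0 convex_univ).kConvex, ⟨0, by simp [lowerBounds]⟩,
    ⟨0, fun _ _ => rfl⟩⟩

theorem IsRegularKConvex.exists_abs_le {K : ℝ} {V : ℝ → ℝ} (hV : IsRegularKConvex K V) (b : ℝ) :
    ∃ M, ∀ x ≤ b, |V x| ≤ M := by
  obtain ⟨c, hc⟩ := hV.exists_eq_on_Iic
  obtain ⟨M, hM⟩ := isCompact_Icc.exists_bound_of_continuousOn (s := Icc c (max c b))
    hV.continuous.continuousOn
  refine ⟨M, fun x hxb => ?_⟩
  rcases le_or_gt x c with hxc | hcx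
  · rw [hc x hxc]
    exact hM c ⟨le_rfl, le_max_left c b⟩
  · exact hM x ⟨hcx.le, hxb.trans (le_max_right c b)⟩

section Expectation

variable {V : ℝ → ℝ} {ν : Measure ℝ}

theorem integrable_comp_sub_of_abs_le [IsFiniteMeasure ν] (hVc : Continuous V)
    (hν : ∀ᵐ ξ ∂ν, 0 ≤ ξ) (hbdd : ∀ b, ∃ M, ∀ x ≤ b, |V x| ≤ M) (y : ℝ) :
    Integrable (fun ξ => V (y - ξ)) ν := by
  obtain ⟨M, hM⟩ := hbdd y
  exact (integrable_const M).mono' (hVc.comp (continuous_sub_left y)).aestronglyMeasurable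
    (hν.mono fun ξ hξ => hM _ (by linarith))

theorem continuous_integral_comp_sub_of_abs_le [IsFiniteMeasure ν] (hVc : Continuous V)
    (hν : ∀ᵐ ξ ∂ν, 0 ≤ ξ) (hbdd : ∀ b, ∃ M, ∀ x ≤ b, |V x| ≤ M) :
    Continuous (fun y => ∫ ξ, V (y - ξ) ∂ν) := by
  refine continuous_iff_continuousAt.2 fun y₀ => ?_
  obtain ⟨M, hM⟩ := hbdd (y₀ + 1)
  refine continuousAt_of_dominated (bound := fun _ => M)
    (Eventually.of_forall fun y => (hVc.comp (continuous_sub_left y)).aestronglyMeasurable)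
    ((eventually_lt_nhds (lt_add_one y₀)).mono fun y hy =>
      hν.mono fun ξ hξ => hM _ (by linarith))
    (integrable_const M)
    (Eventually.of_forall fun ξ => (hVc.comp (continuous_sub_right ξ)).continuousAt)

theorem KConvex.integral_comp_sub [IsProbabilityMeasure ν] {K : ℝ} (hV : KConvex K V)
    (hint : ∀ y, Integrable (fun ξ => V (y - ξ)) ν) :
    KConvex K (fun y => ∫ ξ, V (y - ξ) ∂ν) := by
  intro x z y hxz hzy
  have hpt : ∀ ξ, (y - x) * V (z - ξ) ≤ (y - z) * V (x - ξ) + (z - x) * (V (y - ξ) + K) :=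
    fun ξ => by simpa using hV (sub_le_sub_right hxz ξ) (sub_le_sub_right hzy ξ)
  have hyK : Integrable (fun ξ => V (y - ξ) + K) ν := (hint y).add (integrable_const K)
  have hx' : Integrable (fun ξ => (y - z) * V (x - ξ)) ν := (hint x).const_mul _
  have hy' : Integrable (fun ξ => (z - x) * (V (y - ξ) + K)) ν := hyK.const_mul _
  have hmono : ∫ ξ, (y - x) * V (z - ξ) ∂ν ≤
      ∫ ξ, ((y - z) * V (x - ξ) + (z - x) * (V (y - ξ) + K)) ∂ν :=
    integral_mono ((hint z).const_mul _) (hx'.add hy') hpt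
  rw [integral_add hx' hy', integral_const_mul, integral_const_mul, integral_const_mul,
    integral_add (hint y) (integrable_const K), integral_const] at hmono
  simpa using hmono

end Expectation

theorem IsRegularKConvex.isCoerciveKConvex_add_integral {K K' α : ℝ} {V C H : ℝ → ℝ}
    (hV : IsRegularKConvex K' V) {ν : Measure ℝ} [IsProbabilityMeasure ν] (hν : ∀ᵐ ξ ∂ν, 0 ≤ ξ) (hα : 0 ≤ α)
    (hαK : α * K' ≤ K) (hC : ConvexOn ℝ univ C) (hCcoer : Tendsto C (cocompact ℝ) atTop)
    (hH : ∀ y, H y = C y + α * ∫ ξ, V (y - ξ) ∂ν) : IsCoerciveKConvex K H := by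
  have hint := integrable_comp_sub_of_abs_le hV.continuous hν hV.exists_abs_le
  obtain ⟨m, hm⟩ := hV.bddBelow
  have hHeq : H = C + fun y => α * ∫ ξ, V (y - ξ) ∂ν := funext hH
  refine ⟨?_, ?_, ?_⟩
  · rw [hHeq]
    exact (continuousOn_univ.1 (hC.continuousOn isOpen_univ)).add (continuous_const.mul
      (continuous_integral_comp_sub_of_abs_le hV.continuous hν hV.exists_abs_le))
  · rw [hHeq]
    exact (hC.kConvex.add ((hV.kConvex.integral_comp_sub hint).const_mul hα)).mono
      (by rwa [zero_add])
  · have hIm : ∀ y, m ≤ ∫ ξ, V (y - ξ) ∂ν := fun y => by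
      simpa using integral_mono (integrable_const m) (hint y) fun ξ => hm ⟨y - ξ, rfl⟩
    refine tendsto_atTop_mono (fun y => ?_) (tendsto_atTop_add_const_right _ (α * m) hCcoer)
    rw [hH]
    gcongr
    exact hIm y

theorem IsCoerciveKConvex.isRegularKConvex_orderValue {K : ℝ} {H : ℝ → ℝ} (hK : 0 ≤ K)
    (hH : IsCoerciveKConvex K H) : IsRegularKConvex K (orderValue K H) := by
  obtain ⟨S, hS, s, hs, hV⟩ := exists_orderValue_eq_comp_max hK hH
  rw [hV]
  exact ⟨hH.continuous.comp (continuous_id.max continuous_const),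
    hH.kConvex.comp_max fun x y hsx hxy => hH.kConvex.le_add_of_le hS.1 hs.1.2 hsx hxy,
    ⟨H S, forall_mem_range.2 fun x => hS.1 _⟩,
    ⟨s, fun x hxs => by simp only [max_eq_right hxs, max_self]⟩⟩

theorem stmt1_general
    (T : ℕ)
    (α : ℝ) (hα0 : 0 < α)
    (K : ℕ → ℝ) (hK0 : ∀ t, t < T → 0 ≤ K t)
    (hKmono : ∀ t, t + 2 ≤ T → α * K (t + 1) ≤ K t)
    (ν : ℕ → MeasureTheory.Measure ℝ)
    (hprob : ∀ t, MeasureTheory.IsProbabilityMeasure (ν t))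
    (hpos : ∀ t, ν t (Set.Iio 0) = 0)
    (C : ℕ → ℝ → ℝ)
    (hCconv : ∀ t, t < T → ConvexOn ℝ Set.univ (C t))
    (hCcoer : ∀ t, t < T → Filter.Tendsto (C t) (Filter.cocompact ℝ) Filter.atTop)
    (Hstar Vstar : ℕ → ℝ → ℝ)
    (hVstarT : ∀ x, Vstar T x = 0)
    (hHstar : ∀ t, t < T → ∀ y,
      Hstar t y = C t y + α * ∫ ξ, Vstar (t + 1) (y - ξ) ∂(ν t))
    (hVstar : ∀ t, t < T → ∀ x,
      Vstar t x = sInf ((fun y => K t * (if x < y then (1 : ℝ) else 0) + Hstar t y) '' Set.Ici x))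
    :
    ∀ t, t < T → ∃ Sst : ℝ, IsLeast {x | ∀ y, Hstar t x ≤ Hstar t y} Sst ∧
      ∃ sst : ℝ, IsGreatest {x | x ≤ Sst ∧ Hstar t x = Hstar t Sst + K t} sst ∧
        (∀ x, x < sst → Vstar t x = Hstar t Sst + K t) ∧
        (∀ x, sst ≤ x → Vstar t x = Hstar t x) := by
  have hV : ∀ t < T, Vstar t = orderValue (K t) (Hstar t) := fun t ht => funext (hVstar t ht)
  have hH : ∀ t < T, (∃ K', α * K' ≤ K t ∧ IsRegularKConvex K' (Vstar (t + 1))) →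
      IsCoerciveKConvex (K t) (Hstar t) := by
    rintro t ht ⟨K', hαK, hreg⟩
    have := hprob t
    exact hreg.isCoerciveKConvex_add_integral (ae_iff.2 (by simp only [not_le]; exact hpos t))
      hα0.le hαK (hCconv t ht) (hCcoer t ht) (hHstar t ht)
  have hnext : ∀ n t, t + n + 1 = T →
      ∃ K', α * K' ≤ K t ∧ IsRegularKConvex K' (Vstar (t + 1)) := by
    intro n
    induction n with
    | zero =>
      intro t ht
      refine ⟨0, by simpa using hK0 t (by omega), ?_⟩
      rw [show t + 1 = T by omega, funext hVstarT]
      exact isRegularKConvex_zero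
    | succ n ih =>
      intro t ht
      refine ⟨K (t + 1), hKmono t (by omega), ?_⟩
      rw [hV (t + 1) (by omega)]
      exact (hH (t + 1) (by omega) (ih (t + 1) (by omega))).isRegularKConvex_orderValue
        (hK0 (t + 1) (by omega))
  intro t ht
  obtain ⟨S, hS, s, hs, hVeq⟩ :=
    exists_orderValue_eq_comp_max (hK0 t ht) (hH t ht (hnext (T - t - 1) t (by omega)))
  refine ⟨S, hS, s, hs, fun x hxs => ?_, fun x hsx => ?_⟩
  · rw [hV t ht, congrFun hVeq x, max_eq_right hxs.le, hs.1.2]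
  · rw [hV t ht, congrFun hVeq x, max_eq_left hsx]

theorem stmt1
    (T : ℕ) (hT : 2 ≤ T)
    (α : ℝ) (hα0 : 0 < α) (hα1 : α ≤ 1)
    (K : ℕ → ℝ) (hK0 : ∀ t, t < T → 0 ≤ K t)
    (hKmono : ∀ t, t + 2 ≤ T → α * K (t + 1) ≤ K t)
    (ν : ℕ → MeasureTheory.Measure ℝ)
    (hprob : ∀ t, MeasureTheory.IsProbabilityMeasure (ν t))
    (hpos : ∀ t, ν t (Set.Iio 0) = 0)
    (F : ℕ → ℝ → ℝ) (hF : ∀ t x, F t x = (ν t (Set.Iic x)).toReal)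
    (C : ℕ → ℝ → ℝ)
    (hCconv : ∀ t, t < T → ConvexOn ℝ Set.univ (C t))
    (hCcoer : ∀ t, t < T → Filter.Tendsto (C t) (Filter.cocompact ℝ) Filter.atTop)
    (Hstar Vstar : ℕ → ℝ → ℝ)
    (hVstarT : ∀ x, Vstar T x = 0)
    (hHstar : ∀ t, t < T → ∀ y,
      Hstar t y = C t y + α * ∫ ξ, Vstar (t + 1) (y - ξ) ∂(ν t))
    (hVstar : ∀ t, t < T → ∀ x,
      Vstar t x = sInf ((fun y => K t * (if x < y then (1 : ℝ) else 0) + Hstar t y) '' Set.Ici x))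
    :
    ∀ t, t < T → ∃ Sst : ℝ, IsLeast {x | ∀ y, Hstar t x ≤ Hstar t y} Sst ∧
      ∃ sst : ℝ, IsGreatest {x | x ≤ Sst ∧ Hstar t x = Hstar t Sst + K t} sst ∧
        (∀ x, x < sst → Vstar t x = Hstar t Sst + K t) ∧
        (∀ x, sst ≤ x → Vstar t x = Hstar t x) :=
  stmt1_general T α hα0 K hK0 hKmono ν hprob hpos C hCconv hCcoer Hstar Vstar hVstarT hHstar hVstar
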